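/- For all polynomials p, q in ℂ[z_0,…,z_{m−1}], the Bessel–Fischer product satisfies ⟨R² p, q⟩_B = 0 = ⟨p, R² q⟩_B, where R² = ∑_{i,j} β^{ij} z_i z_j; hence the Bessel–Fischer product descends to a well-defined pairing on the quotient ℂ[z]/⟨R²⟩. -/

import Mathlib

open MvPolynomial

noncomputable section

/-- Complex polynomials in the variables `z_0, …, z_{m−1}`. -/
abbrev Pm (m : ℕ) := MvPolynomial (Fin m) ℂ

/-- The diagonal entries of the bilinear form `β`: `β_{00} = −1`, `β_{kk} = 1` for `k ≥ 1`. -/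
def sgn (m : ℕ) (i : Fin m) : ℂ := if (i : ℕ) = 0 then -1 else 1

/-- The plain partial derivative `∂^i` as a linear operator. -/
def DOp (m : ℕ) (i : Fin m) : Module.End ℂ (Pm m) := (pderiv i).toLinearMap

/-- The lowered partial derivative `∂_i = ∑_k β_{ik} ∂^k`. -/
def dlow (m : ℕ) (i : Fin m) : Module.End ℂ (Pm m) := sgn m i • DOp m i

/-- Multiplication by the variable `z_i`. -/
def mulX (m : ℕ) (i : Fin m) : Module.End ℂ (Pm m) := LinearMap.mulLeft ℂ (X i)

/-- The Euler operator `E = ∑_{i,j} β^{ij} z_i ∂_j`. -/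
def EOp (m : ℕ) : Module.End ℂ (Pm m) := ∑ i, sgn m i • (mulX m i * dlow m i)

/-- The Laplacian `Δ = ∑_{i,j} β^{ij} ∂_i ∂_j`. -/
def LapOp (m : ℕ) : Module.End ℂ (Pm m) := ∑ i, sgn m i • (dlow m i * dlow m i)

/-- The Bessel operator `B(z_i) = (m − 2 + 2E)∂_i − z_i Δ` (parameter `λ = 2 − m`). -/
def BOp (m : ℕ) (i : Fin m) : Module.End ℂ (Pm m) :=
  (((m : ℂ) - 2) • (1 : Module.End ℂ (Pm m)) + (2 : ℂ) • EOp m) * dlow m i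
    - mulX m i * LapOp m

/-- The modified Bessel operator: `B̃(z_0) = −B(z_0)`, `B̃(z_k) = B(z_k)` for `k ≥ 1`. -/
def BtOp (m : ℕ) (i : Fin m) : Module.End ℂ (Pm m) := sgn m i • BOp m i

/-- The Bessel–Fischer product `⟨p,q⟩_B := (p(B̃) q̄)(0)`: substitute the modified
Bessel operators for the variables of `p`, apply to the coefficient-conjugate of `q`,
and evaluate at `0`. -/
def BF (m : ℕ) (p q : Pm m) : ℂ :=
  eval (0 : Fin m → ℂ)
    (((∑ α ∈ p.support, p.coeff α • (List.ofFn fun i : Fin m => (BtOp m i) ^ (α i)).prod) :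
        Module.End ℂ (Pm m)) (map (starRingEnd ℂ) q))

/-- The angular momentum operator `L_{ij} = z_i ∂_j − z_j ∂_i`. -/
def LOp (m : ℕ) (i j : Fin m) : Module.End ℂ (Pm m) :=
  mulX m i * dlow m j - mulX m j * dlow m i

/-- The squared radial coordinate `R² = ∑_{i,j} β^{ij} z_i z_j`. -/
def R2 (m : ℕ) : Pm m := ∑ i, sgn m i • (X i * X i)

/-!
The modified Bessel operators commute pairwise, so `p ↦ p(B̃)` is an algebra homomorphism, and a
Weyl-algebra computation gives `∑ β^{ii} B̃(z_i)² = R² Δ²`. Hence `(R² p)(B̃) = R² Δ² p(B̃)` takes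
values in `R² ℂ[z]`, which vanishes at `0`. For the other slot, `B(z_i)` is tangential to the
cone: `B(z_i) (R² f) = R² (B(z_i) + 4 ∂_i) f`, so `p(B̃) ∘ R² = R² ∘ p(B̃')` for shifted operators
`B̃'`, while `conj (R² q) = R² (conj q)` because `R²` has real coefficients.
-/

theorem pderiv_pderiv_comm {R σ : Type*} [CommSemiring R] (i j : σ) (f : MvPolynomial σ R) :
    pderiv i (pderiv j f) = pderiv j (pderiv i f) := by
  classical
  induction f using MvPolynomial.induction_on with
  | C a => simp
  | add p q hp hq => simp [hp, hq]
  | mul_X p k hp =>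
    simp only [pderiv_mul, map_add, hp, pderiv_X, Pi.single_apply, apply_ite (pderiv _), mul_ite,
      mul_one, mul_zero, map_zero]
    split_ifs <;> abel

theorem SemiconjBy.list_prod_ofFn {M : Type*} [Monoid M] {t : M} :
    ∀ {n : ℕ} {u v : Fin n → M}, (∀ i, SemiconjBy t (u i) (v i)) →
      SemiconjBy t (List.ofFn u).prod (List.ofFn v).prod
  | 0, _, _, _ => by simp
  | _ + 1, _, _, h => by
    simpa only [List.ofFn_succ, List.prod_cons] using
      (h 0).mul_right (SemiconjBy.list_prod_ofFn fun i => h i.succ)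

section OrderedEval

variable {R A : Type*} [CommSemiring R] [Semiring A] [Algebra R A] {n : ℕ}

def orderedEval (b : Fin n → A) (p : MvPolynomial (Fin n) R) : A :=
  ∑ α ∈ p.support, p.coeff α • (List.ofFn fun i => b i ^ α i).prod

theorem semiconjBy_orderedEval {t : A} {b c : Fin n → A} (h : ∀ i, SemiconjBy t (c i) (b i))
    (p : MvPolynomial (Fin n) R) : SemiconjBy t (orderedEval c p) (orderedEval b p) := by
  rw [SemiconjBy, orderedEval, orderedEval, Finset.mul_sum, Finset.sum_mul]
  refine Finset.sum_congr rfl fun α _ => ?_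
  exact ((SemiconjBy.list_prod_ofFn fun i => (h i).pow_right (α i)).smul_right _).eq

theorem isMulCommutative_adjoin_range {b : Fin n → A} (hb : ∀ i j, Commute (b i) (b j)) :
    IsMulCommutative (Algebra.adjoin R (Set.range b)) :=
  Algebra.isMulCommutative_adjoin R (by rintro _ ⟨i, rfl⟩ _ ⟨j, rfl⟩; exact hb i j)

open scoped IsMulCommutative in
def orderedEvalAlgHom (b : Fin n → A) (hb : ∀ i j, Commute (b i) (b j)) :
    MvPolynomial (Fin n) R →ₐ[R] A :=
  haveI := isMulCommutative_adjoin_range (R := R) hb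
  (Algebra.adjoin R (Set.range b)).val.comp (aeval fun i => ⟨b i, Algebra.subset_adjoin ⟨i, rfl⟩⟩)

theorem orderedEvalAlgHom_X (b : Fin n → A) (hb : ∀ i j, Commute (b i) (b j)) (i : Fin n) :
    orderedEvalAlgHom (R := R) b hb (X i) = b i := by
  simp [orderedEvalAlgHom]

open scoped IsMulCommutative in
theorem orderedEvalAlgHom_apply (b : Fin n → A) (hb : ∀ i j, Commute (b i) (b j))
    (p : MvPolynomial (Fin n) R) : orderedEvalAlgHom b hb p = orderedEval b p := by
  have := isMulCommutative_adjoin_range (R := R) hb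
  conv_lhs => rw [p.as_sum]
  rw [map_sum]
  refine Finset.sum_congr rfl fun α _ => ?_
  rw [orderedEvalAlgHom, AlgHom.comp_apply, aeval_monomial,
    Finsupp.prod_fintype _ _ fun i => pow_zero _, ← List.prod_ofFn, ← Algebra.smul_def, map_smul,
    map_list_prod, List.map_ofFn]
  rfl

end OrderedEval

section Operators

variable {m : ℕ}

theorem sgn_mul_self (i : Fin m) : sgn m i * sgn m i = 1 := by
  unfold sgn; split_ifs <;> norm_num

@[simp]
theorem sgn_smul_sgn_smul {M : Type*} [AddCommGroup M] [Module ℂ M] (i : Fin m) (x : M) :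
    sgn m i • sgn m i • x = x := by
  rw [smul_smul, sgn_mul_self, one_smul]

theorem conj_sgn (i : Fin m) : starRingEnd ℂ (sgn m i) = sgn m i := by
  unfold sgn; split_ifs <;> simp

theorem dlow_apply (i : Fin m) (f : Pm m) : dlow m i f = sgn m i • pderiv i f := rfl

theorem EOp_apply (f : Pm m) : EOp m f = ∑ i, sgn m i • (X i * dlow m i f) := by
  simp [EOp, mulX]

theorem LapOp_apply (f : Pm m) : LapOp m f = ∑ i, sgn m i • dlow m i (dlow m i f) := by
  simp [LapOp]

theorem dlow_comm (i j : Fin m) (f : Pm m) : dlow m i (dlow m j f) = dlow m j (dlow m i f) := by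
  simp only [dlow_apply, map_smul, pderiv_pderiv_comm i j, smul_smul, mul_comm]

theorem dlow_mul (i : Fin m) (p f : Pm m) :
    dlow m i (p * f) = p * dlow m i f + dlow m i p * f := by
  simp only [dlow_apply, pderiv_mul, smul_add, mul_smul_comm, smul_mul_assoc, add_comm]

theorem dlow_X (i j : Fin m) : dlow m i (X j) = (if i = j then sgn m i else 0) • 1 := by
  rcases eq_or_ne i j with rfl | h
  · simp [dlow_apply]
  · simp [dlow_apply, h, pderiv_X_of_ne (Ne.symm h)]

@[simp]
theorem dlow_one (i : Fin m) : dlow m i 1 = 0 := by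
  simp [dlow_apply]

theorem dlow_X_mul (i j : Fin m) (f : Pm m) :
    dlow m i (X j * f) = X j * dlow m i f + (if i = j then sgn m i else 0) • f := by
  rw [dlow_mul, dlow_X, smul_one_mul]

theorem EOp_mul (p f : Pm m) : EOp m (p * f) = p * EOp m f + EOp m p * f := by
  simp only [EOp_apply, dlow_mul, Finset.mul_sum, Finset.sum_mul, ← Finset.sum_add_distrib]
  refine Finset.sum_congr rfl fun i _ => ?_
  simp only [smul_eq_C_mul]; ring

theorem LapOp_mul (p f : Pm m) :
    LapOp m (p * f) = p * LapOp m f + (2 : ℂ) • ∑ i, sgn m i • (dlow m i p * dlow m i f)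
      + LapOp m p * f := by
  simp only [LapOp_apply, dlow_mul, map_add, Finset.mul_sum, Finset.sum_mul, Finset.smul_sum,
    ← Finset.sum_add_distrib]
  refine Finset.sum_congr rfl fun i _ => ?_
  simp only [smul_eq_C_mul, map_ofNat]; ring

theorem EOp_X (j : Fin m) : EOp m (X j) = X j := by
  simp [EOp_apply, dlow_X]

theorem LapOp_X (j : Fin m) : LapOp m (X j) = 0 := by
  simp only [LapOp_apply, dlow_X, map_smul, dlow_one, smul_zero, Finset.sum_const_zero]

theorem EOp_X_mul (j : Fin m) (f : Pm m) : EOp m (X j * f) = X j * EOp m f + X j * f := by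
  rw [EOp_mul, EOp_X]

theorem LapOp_X_mul (j : Fin m) (f : Pm m) :
    LapOp m (X j * f) = X j * LapOp m f + (2 : ℂ) • dlow m j f := by
  simp [LapOp_mul, LapOp_X, dlow_X]

theorem dlow_EOp (i : Fin m) (f : Pm m) :
    dlow m i (EOp m f) = EOp m (dlow m i f) + dlow m i f := by
  simp [EOp_apply, dlow_X_mul, dlow_comm i, Finset.sum_add_distrib, smul_smul, sgn_mul_self]

theorem LapOp_EOp (f : Pm m) : LapOp m (EOp m f) = EOp m (LapOp m f) + (2 : ℂ) • LapOp m f := by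
  simp only [LapOp_apply, dlow_EOp, map_add, map_smul, map_sum, smul_add, Finset.sum_add_distrib]
  module

theorem LapOp_dlow (i : Fin m) (f : Pm m) : LapOp m (dlow m i f) = dlow m i (LapOp m f) := by
  simp [LapOp_apply, dlow_comm i]

theorem dlow_R2 (i : Fin m) : dlow m i (R2 m) = (2 : ℂ) • X i := by
  simp only [R2, map_sum, map_smul, dlow_X_mul, dlow_X]
  rw [Finset.sum_eq_single i (fun k _ hk => by simp [hk.symm]) (by simp)]
  simp only [if_pos, mul_smul_comm, mul_one, smul_add, sgn_smul_sgn_smul]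
  module

theorem EOp_R2 : EOp m (R2 m) = (2 : ℂ) • R2 m := by
  simp only [EOp_apply, dlow_R2, mul_smul_comm]
  rw [R2, Finset.smul_sum]
  exact Finset.sum_congr rfl fun i _ => smul_comm _ _ _

theorem LapOp_R2 : LapOp m (R2 m) = (2 * m : ℂ) • 1 := by
  simp only [LapOp_apply, dlow_R2, map_smul, dlow_X, if_pos, smul_comm (sgn m _) (2 : ℂ),
    sgn_smul_sgn_smul, Finset.sum_const, Finset.card_univ, Fintype.card_fin]
  rw [← Nat.cast_smul_eq_nsmul ℂ, smul_smul, mul_comm]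

theorem dlow_R2_mul (i : Fin m) (f : Pm m) :
    dlow m i (R2 m * f) = R2 m * dlow m i f + (2 : ℂ) • (X i * f) := by
  rw [dlow_mul, dlow_R2, smul_mul_assoc]

theorem EOp_R2_mul (f : Pm m) : EOp m (R2 m * f) = R2 m * EOp m f + (2 : ℂ) • (R2 m * f) := by
  rw [EOp_mul, EOp_R2, smul_mul_assoc]

theorem LapOp_R2_mul (f : Pm m) :
    LapOp m (R2 m * f) = R2 m * LapOp m f + (4 : ℂ) • EOp m f + (2 * m : ℂ) • f := by
  rw [LapOp_mul, LapOp_R2, EOp_apply]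
  simp only [dlow_R2, smul_mul_assoc, one_mul, Finset.smul_sum, smul_comm (sgn m _) (2 : ℂ),
    smul_smul, ← mul_assoc]
  norm_num

def AOp (m : ℕ) : Module.End ℂ (Pm m) := ((m : ℂ) - 2) • 1 + (2 : ℂ) • EOp m

theorem AOp_apply (f : Pm m) : AOp m f = ((m : ℂ) - 2) • f + (2 : ℂ) • EOp m f := rfl

theorem BOp_apply (i : Fin m) (f : Pm m) : BOp m i f = AOp m (dlow m i f) - X i * LapOp m f := rfl

theorem dlow_AOp (i : Fin m) (f : Pm m) :
    dlow m i (AOp m f) = AOp m (dlow m i f) + (2 : ℂ) • dlow m i f := by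
  simp only [AOp_apply, map_add, map_smul, dlow_EOp]
  module

theorem LapOp_AOp (f : Pm m) : LapOp m (AOp m f) = AOp m (LapOp m f) + (4 : ℂ) • LapOp m f := by
  simp only [AOp_apply, map_add, map_smul, LapOp_EOp]
  module

theorem AOp_X_mul (j : Fin m) (f : Pm m) :
    AOp m (X j * f) = X j * AOp m f + (2 : ℂ) • (X j * f) := by
  simp only [AOp_apply, EOp_X_mul, mul_add, mul_smul_comm]
  module

theorem AOp_R2_mul (f : Pm m) : AOp m (R2 m * f) = R2 m * AOp m f + (4 : ℂ) • (R2 m * f) := by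
  simp only [AOp_apply, EOp_R2_mul, mul_add, mul_smul_comm]
  module

theorem BOp_BOp_apply (i j : Fin m) (f : Pm m) :
    BOp m i (BOp m j f) = AOp m (AOp m (dlow m i (dlow m j f)))
      + (2 : ℂ) • AOp m (dlow m i (dlow m j f))
      - X j * dlow m i (AOp m (LapOp m f)) - X i * dlow m j (AOp m (LapOp m f))
      - (if i = j then sgn m i else 0) • AOp m (LapOp m f)
      + X i * (X j * LapOp m (LapOp m f)) := by
  -- normal order: multiplications by `X j` outermost, then `A`, `∂`, and `Δ` innermost
  simp only [BOp_apply, map_sub, map_add, map_smul, dlow_AOp, LapOp_AOp, dlow_X_mul, LapOp_X_mul,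
    AOp_X_mul, LapOp_dlow, mul_add]
  simp only [smul_eq_C_mul, map_ofNat]
  ring

theorem commute_BOp (i j : Fin m) : Commute (BOp m i) (BOp m j) := by
  rcases eq_or_ne i j with rfl | hij
  · exact Commute.refl _
  refine LinearMap.ext fun f => ?_
  rw [Module.End.mul_apply, Module.End.mul_apply, BOp_BOp_apply, BOp_BOp_apply, dlow_comm j i,
    mul_left_comm (X j), if_neg hij, if_neg hij.symm]
  abel

theorem BOp_R2_mul (i : Fin m) (f : Pm m) :
    BOp m i (R2 m * f) = R2 m * (BOp m i f + (4 : ℂ) • dlow m i f) := by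
  simp only [BOp_apply, dlow_R2_mul, LapOp_R2_mul, map_add, map_smul, AOp_R2_mul, AOp_X_mul,
    mul_add, mul_sub]
  simp only [AOp_apply, smul_eq_C_mul, map_ofNat, map_sub, map_mul, map_natCast]
  ring

theorem sum_sgn_smul_BOp_mul_self :
    ∑ i, sgn m i • (BOp m i * BOp m i) = LinearMap.mulLeft ℂ (R2 m) * (LapOp m * LapOp m) := by
  refine LinearMap.ext fun f => ?_
  simp only [LinearMap.sum_apply, LinearMap.smul_apply, Module.End.mul_apply,
    LinearMap.mulLeft_apply, BOp_BOp_apply, if_pos, smul_add, smul_sub, Finset.sum_add_distrib,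
    Finset.sum_sub_distrib]
  set g := AOp m (LapOp m f)
  have hAA : ∑ i, sgn m i • AOp m (AOp m (dlow m i (dlow m i f))) = AOp m g := by
    simp only [g, LapOp_apply f, map_sum, map_smul]
  have hA : ∑ i, sgn m i • (2 : ℂ) • AOp m (dlow m i (dlow m i f)) = (2 : ℂ) • g := by
    simp only [g, LapOp_apply f, map_sum, map_smul, Finset.smul_sum, smul_comm (2 : ℂ)]
  have hE : ∑ i, sgn m i • (X i * dlow m i g) = EOp m g := (EOp_apply g).symm
  have hR : ∑ i, sgn m i • (X i * (X i * LapOp m (LapOp m f))) = R2 m * LapOp m (LapOp m f) := by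
    simp only [R2, Finset.sum_mul, smul_mul_assoc, mul_assoc]
  have hm : ∑ i, sgn m i • sgn m i • g = (m : ℂ) • g := by
    simp only [sgn_smul_sgn_smul, Finset.sum_const, Finset.card_univ, Fintype.card_fin,
      Nat.cast_smul_eq_nsmul]
  rw [hAA, hA, hE, hR, hm, AOp_apply g]
  module

end Operators

section BesselFischer

variable {m : ℕ}

theorem commute_BtOp (i j : Fin m) : Commute (BtOp m i) (BtOp m j) :=
  ((commute_BOp i j).smul_left _).smul_right _

theorem BtOp_mul_self (i : Fin m) : BtOp m i * BtOp m i = BOp m i * BOp m i := by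
  rw [BtOp, smul_mul_smul_comm, sgn_mul_self, one_smul]

theorem orderedEval_BtOp_R2_mul (p : Pm m) :
    orderedEval (BtOp m) (R2 m * p)
      = LinearMap.mulLeft ℂ (R2 m) * (LapOp m * LapOp m) * orderedEval (BtOp m) p := by
  have hR2 : orderedEvalAlgHom (BtOp m) commute_BtOp (R2 m)
      = ∑ i, sgn m i • (BOp m i * BOp m i) := by
    simp only [R2, map_sum, map_smul, map_mul, orderedEvalAlgHom_X, BtOp_mul_self]
  rw [← orderedEvalAlgHom_apply _ commute_BtOp, map_mul, hR2, sum_sgn_smul_BOp_mul_self,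
    orderedEvalAlgHom_apply]

theorem semiconjBy_mulLeft_R2_BtOp (i : Fin m) :
    SemiconjBy (LinearMap.mulLeft ℂ (R2 m)) (sgn m i • (BOp m i + (4 : ℂ) • dlow m i))
      (BtOp m i) := by
  refine LinearMap.ext fun f => ?_
  simp only [BtOp, Module.End.mul_apply, LinearMap.mulLeft_apply, LinearMap.smul_apply,
    LinearMap.add_apply, BOp_R2_mul, mul_smul_comm]

theorem eval_zero_R2_mul (f : Pm m) : eval 0 (R2 m * f) = 0 := by
  simp [R2]

theorem map_conj_R2_mul (q : Pm m) :
    map (starRingEnd ℂ) (R2 m * q) = R2 m * map (starRingEnd ℂ) q := by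
  simp [R2, smul_eq_C_mul, conj_sgn]

end BesselFischer

/-- `⟨R² p, q⟩_B = 0 = ⟨p, R² q⟩_B`; hence the Bessel–Fischer product descends to a
well-defined pairing on the quotient `ℂ[z]/⟨R²⟩`. -/
theorem stmt11 (m : ℕ) (p q : Pm m) :
    BF m (R2 m * p) q = 0 ∧ BF m p (R2 m * q) = 0 := by
  have hBF : ∀ a b : Pm m, BF m a b = eval 0 (orderedEval (BtOp m) a (map (starRingEnd ℂ) b)) :=
    fun _ _ => rfl
  refine ⟨?_, ?_⟩
  · rw [hBF, orderedEval_BtOp_R2_mul]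
    exact eval_zero_R2_mul _
  · rw [hBF, map_conj_R2_mul, ← LinearMap.mulLeft_apply ℂ, ← Module.End.mul_apply,
      ((semiconjBy_orderedEval semiconjBy_mulLeft_R2_BtOp) p).eq.symm]
    exact eval_zero_R2_mul _
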